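/- arXiv:2507.23123 — 4 statements merged into one kernel-verified Lean document; each statement's English description precedes it below -/
import Mathlib

section
/- Let $H$ be a Hilbert space and $a,b,c,d\in H$. In the tensor power $H^{\otimes m}$ ($m\ge1$), the second-order difference of tensor products decomposes as: $a^{\otimes m}-b^{\otimes m}-c^{\otimes m}+d^{\otimes m} = \sum_{k=1}^m d^{\otimes k-1}\otimes(a-b-c+d)\otimes c^{\otimes m-k} + \sum_{1\le k<\ell\le m} d^{\otimes k-1}\otimes(a-b)\otimes c^{\otimes \ell-k-1}\otimes(a-c)\otimes a^{\otimes m-\ell} + \sum_{1\le k<\ell\le m} d^{\otimes k-1}\otimes(b-d)\otimes b^{\otimes \ell-k-1}\otimes(a-b)\otimes a^{\otimes m-\ell}$. -/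
open scoped TensorProduct

-- general telescoping lemma
lemma tele_aux {H : Type*} [AddCommGroup H] [Module ℝ H] {m : ℕ} (p q : Fin m → H) :
    (⨂ₜ[ℝ] i : Fin m, q i) - (⨂ₜ[ℝ] i : Fin m, p i)
      = ∑ k : Fin m, ⨂ₜ[ℝ] i : Fin m,
          (if i < k then p i else if i = k then q i - p i else q i) := by
  classical
  have key : ∀ k : Fin m,
      (⨂ₜ[ℝ] i : Fin m, (if i < k then p i else if i = k then q i - p i else q i))
        = (PiTensorProduct.tprod ℝ (fun i : Fin m => if (i:ℕ) < (k:ℕ) then p i else q i))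
          - (PiTensorProduct.tprod ℝ (fun i : Fin m => if (i:ℕ) < (k:ℕ)+1 then p i else q i)) := by
    intro k
    have h1 : (fun i : Fin m => if i < k then p i else if i = k then q i - p i else q i)
        = Function.update (fun i : Fin m => if (i:ℕ) < (k:ℕ) then p i else q i) k (q k - p k) := by
      funext i
      by_cases h : i = k
      · subst h; simp
      · rw [Function.update_of_ne h]
        simp only [Fin.lt_def, h, if_false]
    have h2 : Function.update (fun i : Fin m => if (i:ℕ) < (k:ℕ) then p i else q i) k (q k)
        = fun i : Fin m => if (i:ℕ) < (k:ℕ) then p i else q i := by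
      funext i
      by_cases h : i = k
      · subst h; simp
      · rw [Function.update_of_ne h]
    have h3 : Function.update (fun i : Fin m => if (i:ℕ) < (k:ℕ) then p i else q i) k (p k)
        = fun i : Fin m => if (i:ℕ) < (k:ℕ)+1 then p i else q i := by
      funext i
      by_cases h : i = k
      · subst h; simp
      · rw [Function.update_of_ne h]
        have hne : (i:ℕ) ≠ (k:ℕ) := fun hh => h (Fin.ext hh)
        by_cases h' : (i:ℕ) < (k:ℕ)
        · rw [if_pos h', if_pos (by omega)]
        · rw [if_neg h', if_neg (by omega)]
    rw [show (⨂ₜ[ℝ] i : Fin m, (if i < k then p i else if i = k then q i - p i else q i))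
        = PiTensorProduct.tprod ℝ (Function.update
            (fun i : Fin m => if (i:ℕ) < (k:ℕ) then p i else q i) k (q k - p k)) from
      congrArg _ h1]
    rw [MultilinearMap.map_update_sub, h2, h3]
  rw [Finset.sum_congr rfl fun k _ => key k]
  rw [Fin.sum_univ_eq_sum_range (fun j =>
      PiTensorProduct.tprod ℝ (fun i : Fin m => if (i:ℕ) < j then p i else q i)
        - PiTensorProduct.tprod ℝ (fun i : Fin m => if (i:ℕ) < j+1 then p i else q i)) m]
  rw [Finset.sum_range_sub' (fun j =>
      PiTensorProduct.tprod ℝ (fun i : Fin m => if (i:ℕ) < j then p i else q i)) m]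
  congr 1
  congr 1
  funext i
  simp [i.isLt]

lemma update_if {H : Type*} [AddCommGroup H] {m : ℕ} (k : Fin m) (x y z : H) :
    Function.update (fun i : Fin m => if i < k then x else z) k y
      = fun i : Fin m => if i < k then x else if i = k then y else z := by
  funext i
  by_cases h : i = k
  · subst h; simp
  · rw [Function.update_of_ne h]; simp [h]


/-- Second-order difference of `m`-fold tensor powers: telescoping decomposition
`a^⊗m - b^⊗m - c^⊗m + d^⊗m = ∑_k d^{⊗k-1} ⊗ (a-b-c+d) ⊗ c^{⊗m-k}
 + ∑_{k<ℓ} d^{⊗k-1} ⊗ (a-b) ⊗ c^{⊗ℓ-k-1} ⊗ (a-c) ⊗ a^{⊗m-ℓ}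
 + ∑_{k<ℓ} d^{⊗k-1} ⊗ (b-d) ⊗ b^{⊗ℓ-k-1} ⊗ (a-b) ⊗ a^{⊗m-ℓ}`. -/
theorem stmt_6 {H : Type*} [AddCommGroup H] [Module ℝ H] (m : ℕ) (hm : 1 ≤ m)
    (a b c d : H) :
    ((⨂ₜ[ℝ] _i : Fin m, a) - (⨂ₜ[ℝ] _i : Fin m, b) - (⨂ₜ[ℝ] _i : Fin m, c)
        + (⨂ₜ[ℝ] _i : Fin m, d) : ⨂[ℝ] _i : Fin m, H) =
      (∑ k : Fin m, ⨂ₜ[ℝ] i : Fin m,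
          if i < k then d else if i = k then a - b - c + d else c)
      + (∑ k : Fin m, ∑ l : Fin m, if k < l then
          (⨂ₜ[ℝ] i : Fin m,
            if i < k then d else if i = k then a - b
            else if i < l then c else if i = l then a - c else a) else 0)
      + (∑ k : Fin m, ∑ l : Fin m, if k < l then
          (⨂ₜ[ℝ] i : Fin m,
            if i < k then d else if i = k then b - d
            else if i < l then b else if i = l then a - b else a) else 0) := by
  classical
  have hval : a - b - c + d = (a - b) - (c - d) := by abel
  have hS1 : ∀ k : Fin m,
      (⨂ₜ[ℝ] i : Fin m, if i < k then d else if i = k then a - b - c + d else c)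
        = (⨂ₜ[ℝ] i : Fin m, if i < k then d else if i = k then a - b else c)
          - (⨂ₜ[ℝ] i : Fin m, if i < k then d else if i = k then c - d else c) := by
    intro k
    rw [show (fun i : Fin m => if i < k then d else if i = k then a - b - c + d else c)
        = Function.update (fun i : Fin m => if i < k then d else c) k ((a - b) - (c - d)) by
      rw [← update_if k d (a - b - c + d) c, hval]]
    rw [MultilinearMap.map_update_sub, update_if, update_if]
  have hS2 : ∀ k : Fin m,
      (∑ l : Fin m, if k < l then
          (⨂ₜ[ℝ] i : Fin m,
            if i < k then d else if i = k then a - b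
            else if i < l then c else if i = l then a - c else a) else 0)
        = (⨂ₜ[ℝ] i : Fin m, if i < k then d else if i = k then a - b else a)
          - (⨂ₜ[ℝ] i : Fin m, if i < k then d else if i = k then a - b else c) := by
    intro k
    have t := tele_aux (fun i : Fin m => if i < k then d else if i = k then a - b else c)
        (fun i : Fin m => if i < k then d else if i = k then a - b else a)
    beta_reduce at t
    rw [t]
    refine Finset.sum_congr rfl fun l _ => ?_
    by_cases hkl : k < l
    · rw [if_pos hkl]
      congr 1
      funext i
      simp only [Fin.lt_def, Fin.ext_iff]
      split_ifs <;> first | rfl | omega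
    · rw [if_neg hkl]
      refine (MultilinearMap.map_coord_zero _ l ?_).symm
      rcases (not_lt.mp hkl).lt_or_eq with h | h <;> simp [h]
  have hS3 : (∑ k : Fin m, ∑ l : Fin m, if k < l then
          (⨂ₜ[ℝ] i : Fin m,
            if i < k then d else if i = k then b - d
            else if i < l then b else if i = l then a - b else a) else 0)
      = ∑ l : Fin m,
          ((⨂ₜ[ℝ] i : Fin m, if i < l then b else if i = l then a - b else a)
            - (⨂ₜ[ℝ] i : Fin m, if i < l then d else if i = l then a - b else a)) := by
    rw [Finset.sum_comm]
    refine Finset.sum_congr rfl fun l _ => ?_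
    have t := tele_aux (fun i : Fin m => if i < l then d else if i = l then a - b else a)
        (fun i : Fin m => if i < l then b else if i = l then a - b else a)
    beta_reduce at t
    rw [t]
    refine Finset.sum_congr rfl fun k _ => ?_
    by_cases hkl : k < l
    · rw [if_pos hkl]
      congr 1
      funext i
      simp only [Fin.lt_def, Fin.ext_iff]
      split_ifs <;> first | rfl | omega
    · rw [if_neg hkl]
      refine (MultilinearMap.map_coord_zero _ k ?_).symm
      rcases (not_lt.mp hkl).lt_or_eq with h | h
      · simp [not_lt_of_gt h, h.ne']
      · simp [h]
  have hAB := tele_aux (fun _ : Fin m => b) (fun _ : Fin m => a)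
  have hCD := tele_aux (fun _ : Fin m => d) (fun _ : Fin m => c)
  beta_reduce at hAB hCD
  rw [Finset.sum_congr rfl fun k _ => hS1 k, Finset.sum_congr rfl fun k _ => hS2 k, hS3,
      Finset.sum_sub_distrib, Finset.sum_sub_distrib, Finset.sum_sub_distrib,
      ← hAB, ← hCD]
  abel
end

section
/- Let $W\in L^\infty(\mathbb R^d)$, $\beta,\kappa>0$ with $\kappa\beta\|W\|_{L^\infty}<1$, and let $A:\mathbb R^d\to\mathbb R$ be such that $e^{-\beta(\frac12|v|^2+A(x))}$ is integrable on $\mathbb R^d\times\mathbb R^d$. Then the fixed-point Gibbs equation $M = Z[M]^{-1} e^{-\beta H[M]}$, with $H[M](x,v)=\frac12|v|^2+A(x)+\kappa W*\rho_M(x)$ where $\rho_M(x)=\int M(x,v)\,dv$ and $Z[M]$ the normalization making $M$ a probability density, has at most one solution in the class of probability densities on $\mathbb R^d\times\mathbb R^d$. -/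
/-! The velocity marginals `ρᵢ = ∫ Mᵢ(·, v) dv` of two solutions are probability densities of the
form `kᵢ e^{-β (A + κ W ∗ ρᵢ)}`, so `log (ρ₁ / ρ₂) = const - βκ W ∗ (ρ₁ - ρ₂)` oscillates by at most
`2κβ‖W‖∞ ‖ρ₁ - ρ₂‖₁`. Two probability densities whose log-ratio oscillates by at most `δ` are at
`L¹` distance at most `δ / 2` (essentially `tanh (δ/4) ≤ δ/4`), hence
`‖ρ₁ - ρ₂‖₁ ≤ κβ‖W‖∞ ‖ρ₁ - ρ₂‖₁`. So the mean fields `W ∗ ρᵢ` agree, and with them `M₁` and `M₂`. -/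

open MeasureTheory Real

theorem two_mul_exp_sub_one_le {m : ℝ} (hm : 0 ≤ m) : 2 * (exp m - 1) ≤ m * (exp m + 1) := by
  let f : ℝ → ℝ := fun x => x * (exp x + 1) - 2 * (exp x - 1)
  have hf' : ∀ x, HasDerivAt f (1 - exp x + x * exp x) x := fun x =>
    (((hasDerivAt_id x).mul ((hasDerivAt_exp x).add_const 1)).sub
      (((hasDerivAt_exp x).sub_const 1).const_mul 2)).congr_deriv (by simp only [id]; ring)
  have hmono : MonotoneOn f (Set.Ici 0) := by
    refine monotoneOn_of_deriv_nonneg (convex_Ici 0)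
      (fun x _ => (hf' x).continuousAt.continuousWithinAt)
      (fun x _ => (hf' x).differentiableAt.differentiableWithinAt) fun x _ => ?_
    -- `(1 - x) eˣ ≤ e⁻ˣ eˣ = 1`
    have h := mul_le_mul_of_nonneg_right (add_one_le_exp (-x)) (exp_pos x).le
    rw [← exp_add, neg_add_cancel, exp_zero] at h
    rw [(hf' x).deriv]
    linarith
  have := hmono Set.self_mem_Ici hm hm
  simp only [f, exp_zero] at this
  linarith

-- With `x = e^{a/2}`, `y = e^{b/2}`, AM-GM reduces this to the case `a = b`.
theorem four_mul_exp_sub_one_mul_le {a b : ℝ} (ha : 0 ≤ a) (hb : 0 ≤ b) :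
    4 * ((exp a - 1) * (exp b - 1)) ≤ (a + b) * (exp (a + b) - 1) := by
  set x := exp (a / 2)
  set y := exp (b / 2)
  have hx : 1 ≤ x := one_le_exp (by linarith)
  have hy : 1 ≤ y := one_le_exp (by linarith)
  have hxx : exp a = x * x := by rw [← exp_add, add_halves]
  have hyy : exp b = y * y := by rw [← exp_add, add_halves]
  have hxy : exp ((a + b) / 2) = x * y := by rw [← exp_add]; ring_nf
  have hxyxy : exp (a + b) = (x * y) * (x * y) := by rw [← hxy, ← exp_add, add_halves]
  have htanh := two_mul_exp_sub_one_le (m := (a + b) / 2) (by linarith)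
  rw [hxy] at htanh
  rw [hxx, hyy, hxyxy]
  have hamgm : (x * x - 1) * (y * y - 1) ≤ (x * y - 1) ^ 2 := by nlinarith [sq_nonneg (x - y)]
  nlinarith [mul_le_mul_of_nonneg_left htanh (by nlinarith : (0 : ℝ) ≤ 2 * (x * y - 1))]

theorem four_mul_exp_sub_one_mul_one_sub_exp_le {L U : ℝ} (hL : L ≤ 0) (hU : 0 ≤ U) :
    4 * ((exp U - 1) * (1 - exp L)) ≤ (U - L) * (exp U - exp L) := by
  have h := mul_le_mul_of_nonneg_right (four_mul_exp_sub_one_mul_le hU (neg_nonneg.2 hL))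
    (exp_pos L).le
  have e₁ : exp (-L) * exp L = 1 := by rw [← exp_add, neg_add_cancel, exp_zero]
  have e₂ : exp (U + -L) * exp L = exp U := by rw [← exp_add, neg_add_cancel_right]
  linear_combination h - 4 * (exp U - 1) * e₁ + (U - L) * e₂

theorem abs_le_chord {B C X : ℝ} (hB : 0 ≤ B) (hC : 0 ≤ C) (hXC : -C ≤ X) (hXB : X ≤ B) :
    |X| ≤ (B - C) / (B + C) * X + 2 * B * C / (B + C) := by
  rcases (add_nonneg hB hC).eq_or_lt with h | h
  · obtain rfl : X = 0 := by linarith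
    simp [← h]
  rw [div_mul_eq_mul_div, ← add_div, le_div_iff₀ h]
  rcases abs_cases X with ⟨hX, -⟩ | ⟨hX, -⟩ <;> rw [hX] <;> nlinarith


section

variable {α : Type*} [MeasurableSpace α] {μ : Measure α}

theorem integral_abs_sub_le_of_eq_exp_mul {p q t : α → ℝ} {L U : ℝ}
    (hp : Integrable p μ) (hq : Integrable q μ) (hp1 : ∫ x, p x ∂μ = 1) (hq1 : ∫ x, q x ∂μ = 1)
    (hq0 : ∀ x, 0 ≤ q x) (hpq : ∀ x, p x = exp (t x) * q x) (ht : ∀ x, t x ∈ Set.Icc L U) :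
    ∫ x, |p x - q x| ∂μ ≤ (U - L) / 2 := by
  have hL : exp L ≤ 1 := by
    have := integral_mono (hq.const_mul (exp L)) hp fun x => by
      rw [hpq x]; exact mul_le_mul_of_nonneg_right (exp_le_exp.2 (ht x).1) (hq0 x)
    rwa [integral_const_mul, hq1, hp1, mul_one] at this
  have hU : 1 ≤ exp U := by
    have := integral_mono hp (hq.const_mul (exp U)) fun x => by
      rw [hpq x]; exact mul_le_mul_of_nonneg_right (exp_le_exp.2 (ht x).2) (hq0 x)
    rwa [integral_const_mul, hq1, hp1, mul_one] at this
  set B := exp U - 1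
  set C := 1 - exp L
  -- `|eᵗ - 1|` lies below the chord of `|·|` over `[-C, B]`; its linear part integrates to `0`.
  have hchord : ∀ x, |p x - q x| ≤ (B - C) / (B + C) * (p x - q x) + 2 * B * C / (B + C) * q x := by
    intro x
    have hX := abs_le_chord (X := exp (t x) - 1) (sub_nonneg.2 hU) (sub_nonneg.2 hL)
      (by linarith [exp_le_exp.2 (ht x).1]) (by linarith [exp_le_exp.2 (ht x).2])
    have hpq' : p x - q x = (exp (t x) - 1) * q x := by rw [hpq x]; ring
    rw [hpq', abs_mul, abs_of_nonneg (hq0 x)]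
    nlinarith [mul_le_mul_of_nonneg_right hX (hq0 x)]
  have hpq_int : Integrable (fun x => p x - q x) μ := hp.sub hq
  have hbound : ∫ x, |p x - q x| ∂μ ≤
      ∫ x, ((B - C) / (B + C) * (p x - q x) + 2 * B * C / (B + C) * q x) ∂μ :=
    integral_mono hpq_int.abs ((hpq_int.const_mul _).add (hq.const_mul _)) hchord
  rw [integral_add (hpq_int.const_mul _) (hq.const_mul _), integral_const_mul,
    integral_const_mul, integral_sub hp hq, hp1, hq1, sub_self, mul_zero, zero_add,
    mul_one] at hbound
  refine hbound.trans ?_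
  rcases (add_nonneg (sub_nonneg.2 hU) (sub_nonneg.2 hL)).eq_or_lt with h | h
  · rw [← h, div_zero]
    linarith [exp_le_exp.1 (hL.trans hU)]
  rw [div_le_div_iff₀ h two_pos]
  have := four_mul_exp_sub_one_mul_one_sub_exp_le (exp_le_one_iff.1 hL) (one_le_exp_iff.1 hU)
  simp only [B, C] at h ⊢
  linarith

theorem aemeasurable_of_aemeasurable_mul {w q : α → ℝ} (hwq : AEMeasurable (fun y => w y * q y) μ)
    (hq : AEMeasurable q μ) (hq0 : ∀ y, q y ≠ 0) : AEMeasurable w μ :=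
  (hwq.div hq).congr (.of_forall fun y => mul_div_cancel_right₀ (w y) (hq0 y))

/-- `w` need not be measurable: if it is not, both integrals are the junk value `0`. -/
theorem abs_integral_mul_sub_integral_mul_le {w p q : α → ℝ} {C : ℝ} (hC : 0 ≤ C)
    (hw : ∀ y, |w y| ≤ C) (hp : Integrable p μ) (hq : Integrable q μ)
    (hp0 : ∀ y, p y ≠ 0) (hq0 : ∀ y, q y ≠ 0) :
    |∫ y, w y * p y ∂μ - ∫ y, w y * q y ∂μ| ≤ C * ∫ y, |p y - q y| ∂μ := by
  by_cases hmeas : AEMeasurable w μ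
  · have hbdd : ∀ᵐ y ∂μ, ‖w y‖ ≤ C := .of_forall hw
    have hwp := hp.bdd_mul hmeas.aestronglyMeasurable hbdd
    have hwq := hq.bdd_mul hmeas.aestronglyMeasurable hbdd
    rw [← integral_sub hwp hwq, ← integral_const_mul, ← Real.norm_eq_abs]
    refine norm_integral_le_of_norm_le ((hp.sub hq).abs.const_mul C) (.of_forall fun y => ?_)
    rw [← mul_sub, norm_mul, Real.norm_eq_abs]
    exact mul_le_mul_of_nonneg_right (hw y) (abs_nonneg _)
  · have hundef : ∀ {r : α → ℝ}, Integrable r μ → (∀ y, r y ≠ 0) → ∫ y, w y * r y ∂μ = 0 :=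
      fun hr hr0 => integral_undef fun h =>
        hmeas (aemeasurable_of_aemeasurable_mul h.aemeasurable hr.aemeasurable hr0)
    rw [hundef hp hp0, hundef hq hq0, sub_zero, abs_zero]
    exact mul_nonneg hC (integral_nonneg fun y => abs_nonneg _)

theorem pos_of_forall_eq_mul_exp {ρ f : α → ℝ} {k : ℝ} (hρ : ∀ x, ρ x = k * exp (f x))
    (hρ0 : ∀ x, 0 ≤ ρ x) (hρ1 : ∫ x, ρ x ∂μ = 1) : 0 < k := by
  by_contra! hk
  have hzero : ∀ x, ρ x = 0 := fun x =>
    le_antisymm (hρ x ▸ mul_nonpos_of_nonpos_of_nonneg hk (exp_pos _).le) (hρ0 x)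
  simp [hzero] at hρ1

end

theorem integral_gibbs_eq {X V : Type*} [MeasurableSpace V] {ν : Measure V} {M : X × V → ℝ}
    {K : V → ℝ} {A G : X → ℝ} {β κ Z : ℝ}
    (hM : ∀ z, M z = Z⁻¹ * exp (-β * (K z.2 + A z.1 + κ * G z.1))) (x : X) :
    ∫ v, M (x, v) ∂ν = (Z⁻¹ * ∫ v, exp (-β * K v) ∂ν) * exp (-β * (A x + κ * G x)) := by
  simp_rw [hM, ← integral_const_mul, ← integral_mul_const]
  congr 1 with v
  rw [mul_assoc, ← exp_add]
  ring_nf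

theorem convolution_eq_of_gibbs {X : Type*} [AddGroup X] [MeasurableSpace X] {μ : Measure X}
    {W A ρ₁ ρ₂ : X → ℝ} {β κ CW k₁ k₂ : ℝ} (hβ : 0 ≤ β) (hκ : 0 ≤ κ) (hW : ∀ x, |W x| ≤ CW)
    (hsmall : κ * β * CW < 1) (hρ₁ : Integrable ρ₁ μ) (hρ₂ : Integrable ρ₂ μ)
    (hρ₁0 : ∀ x, 0 ≤ ρ₁ x) (hρ₂0 : ∀ x, 0 ≤ ρ₂ x)
    (hρ₁1 : ∫ x, ρ₁ x ∂μ = 1) (hρ₂1 : ∫ x, ρ₂ x ∂μ = 1)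
    (hρ₁eq : ∀ x, ρ₁ x = k₁ * exp (-β * (A x + κ * ∫ y, W (x - y) * ρ₁ y ∂μ)))
    (hρ₂eq : ∀ x, ρ₂ x = k₂ * exp (-β * (A x + κ * ∫ y, W (x - y) * ρ₂ y ∂μ))) (x : X) :
    ∫ y, W (x - y) * ρ₁ y ∂μ = ∫ y, W (x - y) * ρ₂ y ∂μ := by
  set G₁ : X → ℝ := fun x => ∫ y, W (x - y) * ρ₁ y ∂μ
  set G₂ : X → ℝ := fun x => ∫ y, W (x - y) * ρ₂ y ∂μ
  set s := ∫ y, |ρ₁ y - ρ₂ y| ∂μ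
  have hk₁ := pos_of_forall_eq_mul_exp hρ₁eq hρ₁0 hρ₁1
  have hk₂ := pos_of_forall_eq_mul_exp hρ₂eq hρ₂0 hρ₂1
  have hρ₁pos : ∀ x, 0 < ρ₁ x := fun x => (hρ₁eq x).symm ▸ by positivity
  have hρ₂pos : ∀ x, 0 < ρ₂ x := fun x => (hρ₂eq x).symm ▸ by positivity
  have hG : ∀ x, |G₁ x - G₂ x| ≤ CW * s := fun x =>
    abs_integral_mul_sub_integral_mul_le ((abs_nonneg _).trans (hW 0)) (fun y => hW (x - y))
      hρ₁ hρ₂ (fun y => (hρ₁pos y).ne') fun y => (hρ₂pos y).ne'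
  have hratio : ∀ x, ρ₁ x = exp (log (k₁ / k₂) - β * κ * (G₁ x - G₂ x)) * ρ₂ x := fun x => by
    rw [hρ₁eq x, hρ₂eq x, sub_eq_add_neg, exp_add, exp_log (div_pos hk₁ hk₂),
      mul_mul_mul_comm, div_mul_cancel₀ _ hk₂.ne', ← exp_add]
    simp only [G₁, G₂]
    ring_nf
  have hdev : ∀ x, |β * κ * (G₁ x - G₂ x)| ≤ κ * β * (CW * s) := fun x => by
    rw [abs_mul, abs_of_nonneg (mul_nonneg hβ hκ), mul_comm β κ]
    exact mul_le_mul_of_nonneg_left (hG x) (mul_nonneg hκ hβ)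
  have hs : s ≤ κ * β * (CW * s) := by
    have := integral_abs_sub_le_of_eq_exp_mul hρ₁ hρ₂ hρ₁1 hρ₂1 (fun x => (hρ₂pos x).le) hratio
      (L := log (k₁ / k₂) - κ * β * (CW * s)) (U := log (k₁ / k₂) + κ * β * (CW * s))
      fun x => by constructor <;> linarith [abs_le.1 (hdev x)]
    linarith
  have hs0 : s = 0 := by
    have : 0 ≤ s := integral_nonneg fun y => abs_nonneg _
    nlinarith
  simpa [hs0, sub_eq_zero] using hG x

theorem stmt_9_general (d : ℕ) (W A : EuclideanSpace ℝ (Fin d) → ℝ)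
    (β κ CW : ℝ) (hβ : 0 < β) (hκ : 0 < κ)
    (hW : ∀ x, |W x| ≤ CW) (hsmall : κ * β * CW < 1)
    (M₁ M₂ : EuclideanSpace ℝ (Fin d) × EuclideanSpace ℝ (Fin d) → ℝ)
    (h₁nn : ∀ z, 0 ≤ M₁ z) (h₁int : Integrable M₁) (h₁mass : ∫ z, M₁ z = 1)
    (h₂nn : ∀ z, 0 ≤ M₂ z) (h₂int : Integrable M₂) (h₂mass : ∫ z, M₂ z = 1)
    (Z₁ Z₂ : ℝ)
    (hZ₁ : Z₁ = ∫ z : EuclideanSpace ℝ (Fin d) × EuclideanSpace ℝ (Fin d),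
      Real.exp (-β * (‖z.2‖ ^ 2 / 2 + A z.1
        + κ * ∫ y : EuclideanSpace ℝ (Fin d), W (z.1 - y) * ∫ v : EuclideanSpace ℝ (Fin d), M₁ (y, v))))
    (hZ₂ : Z₂ = ∫ z : EuclideanSpace ℝ (Fin d) × EuclideanSpace ℝ (Fin d),
      Real.exp (-β * (‖z.2‖ ^ 2 / 2 + A z.1
        + κ * ∫ y : EuclideanSpace ℝ (Fin d), W (z.1 - y) * ∫ v : EuclideanSpace ℝ (Fin d), M₂ (y, v))))
    (heq₁ : ∀ z, M₁ z = Z₁⁻¹ * Real.exp (-β * (‖z.2‖ ^ 2 / 2 + A z.1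
        + κ * ∫ y : EuclideanSpace ℝ (Fin d), W (z.1 - y) * ∫ v : EuclideanSpace ℝ (Fin d), M₁ (y, v))))
    (heq₂ : ∀ z, M₂ z = Z₂⁻¹ * Real.exp (-β * (‖z.2‖ ^ 2 / 2 + A z.1
        + κ * ∫ y : EuclideanSpace ℝ (Fin d), W (z.1 - y) * ∫ v : EuclideanSpace ℝ (Fin d), M₂ (y, v)))) :
    M₁ = M₂ := by
  have hG : ∀ x, ∫ y, W (x - y) * (∫ v, M₁ (y, v)) = ∫ y, W (x - y) * ∫ v, M₂ (y, v) :=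
    convolution_eq_of_gibbs hβ.le hκ.le hW hsmall h₁int.integral_prod_left
      h₂int.integral_prod_left (fun x => integral_nonneg fun v => h₁nn _)
      (fun x => integral_nonneg fun v => h₂nn _) ((integral_prod M₁ h₁int).symm.trans h₁mass)
      ((integral_prod M₂ h₂int).symm.trans h₂mass)
      (integral_gibbs_eq (K := fun v => ‖v‖ ^ 2 / 2) heq₁)
      (integral_gibbs_eq (K := fun v => ‖v‖ ^ 2 / 2) heq₂)
  have hZ : Z₁ = Z₂ := by rw [hZ₁, hZ₂]; simp_rw [hG]
  funext z
  rw [heq₁, heq₂, hZ, hG]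

/-- Uniqueness of the mean-field Gibbs equilibrium: if `κβ‖W‖_∞ < 1` and
`e^{-β(|v|²/2 + A(x))}` is integrable, then the fixed-point Gibbs equation
`M = Z[M]⁻¹ e^{-β H[M]}`, `H[M](x,v) = |v|²/2 + A(x) + κ (W * ρ_M)(x)`,
has at most one solution among probability densities on `ℝ^d × ℝ^d`. -/
theorem stmt_9 (d : ℕ) (W A : EuclideanSpace ℝ (Fin d) → ℝ)
    (β κ CW : ℝ) (hβ : 0 < β) (hκ : 0 < κ)
    (hW : ∀ x, |W x| ≤ CW) (hsmall : κ * β * CW < 1)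
    (hint : Integrable (fun p : EuclideanSpace ℝ (Fin d) × EuclideanSpace ℝ (Fin d) =>
      Real.exp (-β * (‖p.2‖ ^ 2 / 2 + A p.1))))
    (M₁ M₂ : EuclideanSpace ℝ (Fin d) × EuclideanSpace ℝ (Fin d) → ℝ)
    (h₁nn : ∀ z, 0 ≤ M₁ z) (h₁int : Integrable M₁) (h₁mass : ∫ z, M₁ z = 1)
    (h₂nn : ∀ z, 0 ≤ M₂ z) (h₂int : Integrable M₂) (h₂mass : ∫ z, M₂ z = 1)
    (Z₁ Z₂ : ℝ)
    (hZ₁ : Z₁ = ∫ z : EuclideanSpace ℝ (Fin d) × EuclideanSpace ℝ (Fin d),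
      Real.exp (-β * (‖z.2‖ ^ 2 / 2 + A z.1
        + κ * ∫ y : EuclideanSpace ℝ (Fin d), W (z.1 - y) * ∫ v : EuclideanSpace ℝ (Fin d), M₁ (y, v))))
    (hZ₂ : Z₂ = ∫ z : EuclideanSpace ℝ (Fin d) × EuclideanSpace ℝ (Fin d),
      Real.exp (-β * (‖z.2‖ ^ 2 / 2 + A z.1
        + κ * ∫ y : EuclideanSpace ℝ (Fin d), W (z.1 - y) * ∫ v : EuclideanSpace ℝ (Fin d), M₂ (y, v))))
    (heq₁ : ∀ z, M₁ z = Z₁⁻¹ * Real.exp (-β * (‖z.2‖ ^ 2 / 2 + A z.1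
        + κ * ∫ y : EuclideanSpace ℝ (Fin d), W (z.1 - y) * ∫ v : EuclideanSpace ℝ (Fin d), M₁ (y, v))))
    (heq₂ : ∀ z, M₂ z = Z₂⁻¹ * Real.exp (-β * (‖z.2‖ ^ 2 / 2 + A z.1
        + κ * ∫ y : EuclideanSpace ℝ (Fin d), W (z.1 - y) * ∫ v : EuclideanSpace ℝ (Fin d), M₂ (y, v)))) :
    M₁ = M₂ :=
  stmt_9_general d W A β κ CW hβ hκ hW hsmall M₁ M₂ h₁nn h₁int h₁mass h₂nn h₂int h₂mass Z₁ Z₂ hZ₁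
    hZ₂ heq₁ heq₂
end

section
/- Let $(a_m)_{m\ge1}$ be nonnegative numbers and suppose there exist constants $C\ge1$, $\kappa\ge0$, and $C_0>0$ such that for all $1\le m\le N$: $a_m \le C\mathbf{1}_{\{m=1\}}R + C\kappa\Big(a_{m+1}' + \sum_{\ell=1}^{m}\binom{m-1}{\ell-1}b_\ell b_{m+1-\ell}\Big)$ where $b_\ell := \frac{C_0(\ell-1)!}{\ell^2}N^{1-\ell}$ (and $a'_{m+1}\le b_{m+1}$). Then $\sum_{\ell=1}^m \binom{m-1}{\ell-1} \frac{C_0(\ell-1)!}{\ell^2}N^{1-\ell}\cdot\frac{C_0(m-\ell)!}{(m+1-\ell)^2}N^{\ell-m} \le C' C_0^2 \frac{(m-1)!}{m^2}N^{1-m}$ for a universal constant $C'$, i.e. the binomial-weighted convolution of the sequence $\ell\mapsto \frac{(\ell-1)!}{\ell^2}N^{1-\ell}$ reproduces itself up to a constant. -/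
open Finset

private lemma sum_inv_sq_le' : ∀ n : ℕ, 1 ≤ n →
    ∑ k ∈ Icc 1 n, (1 : ℝ) / (k : ℝ) ^ 2 ≤ 2 - 1 / n := by
  intro n hn
  induction n with
  | zero => omega
  | succ n ih =>
    rcases Nat.eq_zero_or_pos n with h | h
    · subst h; norm_num
    · have hsum := ih h
      have hn0 : (0 : ℝ) < (n : ℝ) := by exact_mod_cast h
      rw [Finset.sum_Icc_succ_top (by omega : 1 ≤ n + 1)]
      have key : (1 : ℝ) / ((n : ℝ) + 1) ^ 2 ≤ 1 / n - 1 / ((n : ℝ) + 1) := by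
        rw [div_sub_div _ _ hn0.ne' (by positivity)]
        rw [div_le_div_iff₀ (by positivity) (by positivity)]
        nlinarith
      push_cast
      nlinarith [hsum, key]

private lemma sum_inv_sq_le (n : ℕ) : ∑ k ∈ Icc 1 n, (1 : ℝ) / (k : ℝ) ^ 2 ≤ 2 := by
  rcases Nat.eq_zero_or_pos n with h | h
  · subst h; simp
  · have := sum_inv_sq_le' n h
    have hn0 : (0 : ℝ) < (n : ℝ) := by exact_mod_cast h
    have : (0:ℝ) < 1 / n := by positivity
    linarith [sum_inv_sq_le' n h]

private lemma aux_ab (a b : ℝ) (ha : 0 < a) (hb : 0 < b) :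
    1 / (a ^ 2 * b ^ 2) ≤ 2 / (a + b) ^ 2 * (1 / a ^ 2 + 1 / b ^ 2) := by
  rw [show 2 / (a + b) ^ 2 * (1 / a ^ 2 + 1 / b ^ 2)
      = (2 * (a ^ 2 + b ^ 2)) / ((a + b) ^ 2 * (a ^ 2 * b ^ 2)) from by
        field_simp; ring,
    show (1 : ℝ) / (a ^ 2 * b ^ 2) = (a + b) ^ 2 / ((a + b) ^ 2 * (a ^ 2 * b ^ 2)) from by
        field_simp]
  gcongr
  nlinarith [sq_nonneg (a - b)]

private lemma sum_reflect (m : ℕ) :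
    ∑ ℓ ∈ Icc 1 m, (1 : ℝ) / ((m + 1 - ℓ : ℕ) : ℝ) ^ 2
      = ∑ k ∈ Icc 1 m, (1 : ℝ) / (k : ℝ) ^ 2 := by
  refine Finset.sum_nbij' (fun ℓ => m + 1 - ℓ) (fun k => m + 1 - k) ?_ ?_ ?_ ?_
    (fun a _ => rfl) <;>
    · intro a ha
      simp only [Finset.mem_Icc] at *
      omega

/-- Self-reproduction of the binomial-weighted convolution of
`ℓ ↦ C₀(ℓ-1)!/ℓ² · N^{1-ℓ}`: there is a universal constant `C'` such that for all
`1 ≤ m ≤ N` and `C₀ > 0`,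
`∑_{ℓ=1}^m binom(m-1,ℓ-1) · (C₀(ℓ-1)!/ℓ²)N^{1-ℓ} · (C₀(m-ℓ)!/(m+1-ℓ)²)N^{ℓ-m}
  ≤ C' C₀² (m-1)!/m² · N^{1-m}`. -/
theorem stmt_12 :
    ∃ C' : ℝ, 0 < C' ∧
      ∀ (N : ℕ), 1 ≤ N → ∀ C0 : ℝ, 0 < C0 → ∀ m : ℕ, 1 ≤ m → m ≤ N →
        ∑ ℓ ∈ Finset.Icc 1 m,
            (Nat.choose (m - 1) (ℓ - 1) : ℝ) *
              (C0 * (Nat.factorial (ℓ - 1) : ℝ) / (ℓ : ℝ) ^ 2 *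
                (N : ℝ) ^ ((1 : ℤ) - (ℓ : ℤ))) *
              (C0 * (Nat.factorial (m - ℓ) : ℝ) / ((m + 1 - ℓ : ℕ) : ℝ) ^ 2 *
                (N : ℝ) ^ ((ℓ : ℤ) - (m : ℤ))) ≤
          C' * C0 ^ 2 * (Nat.factorial (m - 1) : ℝ) / (m : ℝ) ^ 2 *
            (N : ℝ) ^ ((1 : ℤ) - (m : ℤ)) := by
  refine ⟨8, by norm_num, ?_⟩
  intro N hN C0 hC0 m hm hmN
  have hN0 : ((N : ℝ)) ≠ 0 := by
    have : (0 : ℝ) < (N : ℝ) := by exact_mod_cast hN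
    exact this.ne'
  have hm0 : (0 : ℝ) < (m : ℝ) := by exact_mod_cast hm
  -- rewrite each term
  have key : ∀ ℓ ∈ Finset.Icc 1 m,
      (Nat.choose (m - 1) (ℓ - 1) : ℝ) *
        (C0 * (Nat.factorial (ℓ - 1) : ℝ) / (ℓ : ℝ) ^ 2 *
          (N : ℝ) ^ ((1 : ℤ) - (ℓ : ℤ))) *
        (C0 * (Nat.factorial (m - ℓ) : ℝ) / ((m + 1 - ℓ : ℕ) : ℝ) ^ 2 *
          (N : ℝ) ^ ((ℓ : ℤ) - (m : ℤ)))
      = C0 ^ 2 * (Nat.factorial (m - 1) : ℝ) * (N : ℝ) ^ ((1 : ℤ) - (m : ℤ)) *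
          (1 / ((ℓ : ℝ) ^ 2 * ((m + 1 - ℓ : ℕ) : ℝ) ^ 2)) := by
    intro ℓ hℓ
    simp only [Finset.mem_Icc] at hℓ
    obtain ⟨h1, h2⟩ := hℓ
    have hfacN : Nat.choose (m - 1) (ℓ - 1) * Nat.factorial (ℓ - 1) * Nat.factorial (m - ℓ)
        = Nat.factorial (m - 1) := by
      have := Nat.choose_mul_factorial_mul_factorial (show ℓ - 1 ≤ m - 1 by omega)
      rwa [show m - 1 - (ℓ - 1) = m - ℓ by omega] at this
    have hfac : (Nat.choose (m - 1) (ℓ - 1) : ℝ) * (Nat.factorial (ℓ - 1) : ℝ) *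
        (Nat.factorial (m - ℓ) : ℝ) = (Nat.factorial (m - 1) : ℝ) := by
      exact_mod_cast congrArg (Nat.cast : ℕ → ℝ) hfacN
    have hzpow : (N : ℝ) ^ ((1 : ℤ) - (ℓ : ℤ)) * (N : ℝ) ^ ((ℓ : ℤ) - (m : ℤ))
        = (N : ℝ) ^ ((1 : ℤ) - (m : ℤ)) := by
      rw [← zpow_add₀ hN0]
      ring_nf
    calc (Nat.choose (m - 1) (ℓ - 1) : ℝ) *
        (C0 * (Nat.factorial (ℓ - 1) : ℝ) / (ℓ : ℝ) ^ 2 *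
          (N : ℝ) ^ ((1 : ℤ) - (ℓ : ℤ))) *
        (C0 * (Nat.factorial (m - ℓ) : ℝ) / ((m + 1 - ℓ : ℕ) : ℝ) ^ 2 *
          (N : ℝ) ^ ((ℓ : ℤ) - (m : ℤ)))
        = C0 ^ 2 * ((Nat.choose (m - 1) (ℓ - 1) : ℝ) * (Nat.factorial (ℓ - 1) : ℝ) *
            (Nat.factorial (m - ℓ) : ℝ)) *
            ((N : ℝ) ^ ((1 : ℤ) - (ℓ : ℤ)) * (N : ℝ) ^ ((ℓ : ℤ) - (m : ℤ))) *
            (1 / ((ℓ : ℝ) ^ 2 * ((m + 1 - ℓ : ℕ) : ℝ) ^ 2)) := by ring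
      _ = C0 ^ 2 * (Nat.factorial (m - 1) : ℝ) * (N : ℝ) ^ ((1 : ℤ) - (m : ℤ)) *
            (1 / ((ℓ : ℝ) ^ 2 * ((m + 1 - ℓ : ℕ) : ℝ) ^ 2)) := by rw [hfac, hzpow]
  rw [Finset.sum_congr rfl key, ← Finset.mul_sum]
  -- bound the sum S
  have hS : ∑ ℓ ∈ Finset.Icc 1 m, (1 / ((ℓ : ℝ) ^ 2 * ((m + 1 - ℓ : ℕ) : ℝ) ^ 2))
      ≤ 8 / (m : ℝ) ^ 2 := by
    have step1 : ∑ ℓ ∈ Finset.Icc 1 m, (1 / ((ℓ : ℝ) ^ 2 * ((m + 1 - ℓ : ℕ) : ℝ) ^ 2))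
        ≤ ∑ ℓ ∈ Finset.Icc 1 m, (2 / ((m : ℝ) + 1) ^ 2 *
            (1 / (ℓ : ℝ) ^ 2 + 1 / ((m + 1 - ℓ : ℕ) : ℝ) ^ 2)) := by
      apply Finset.sum_le_sum
      intro ℓ hℓ
      simp only [Finset.mem_Icc] at hℓ
      obtain ⟨h1, h2⟩ := hℓ
      have ha : (0 : ℝ) < (ℓ : ℝ) := by exact_mod_cast h1
      have hbN : 1 ≤ m + 1 - ℓ := by omega
      have hb : (0 : ℝ) < ((m + 1 - ℓ : ℕ) : ℝ) := by exact_mod_cast hbN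
      have hab : (ℓ : ℝ) + ((m + 1 - ℓ : ℕ) : ℝ) = (m : ℝ) + 1 := by
        have : ((m + 1 - ℓ : ℕ) : ℝ) = (m : ℝ) + 1 - (ℓ : ℝ) := by
          have : (m + 1 - ℓ) + ℓ = m + 1 := by omega
          have := congrArg (Nat.cast : ℕ → ℝ) this
          push_cast at this
          linarith
        rw [this]; ring
      have := aux_ab (ℓ : ℝ) ((m + 1 - ℓ : ℕ) : ℝ) ha hb
      rwa [hab] at this
    have step2 : ∑ ℓ ∈ Finset.Icc 1 m, (2 / ((m : ℝ) + 1) ^ 2 *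
            (1 / (ℓ : ℝ) ^ 2 + 1 / ((m + 1 - ℓ : ℕ) : ℝ) ^ 2))
        = 2 / ((m : ℝ) + 1) ^ 2 *
            (∑ ℓ ∈ Finset.Icc 1 m, (1 : ℝ) / (ℓ : ℝ) ^ 2 +
             ∑ ℓ ∈ Finset.Icc 1 m, (1 : ℝ) / ((m + 1 - ℓ : ℕ) : ℝ) ^ 2) := by
      rw [← Finset.mul_sum, Finset.sum_add_distrib]
    have hs1 := sum_inv_sq_le m
    have hs2 : ∑ ℓ ∈ Finset.Icc 1 m, (1 : ℝ) / ((m + 1 - ℓ : ℕ) : ℝ) ^ 2 ≤ 2 := by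
      rw [sum_reflect m]; exact hs1
    have hmono : 2 / ((m : ℝ) + 1) ^ 2 ≤ 2 / (m : ℝ) ^ 2 := by
      gcongr
      nlinarith [hm0]
    calc ∑ ℓ ∈ Finset.Icc 1 m, (1 / ((ℓ : ℝ) ^ 2 * ((m + 1 - ℓ : ℕ) : ℝ) ^ 2))
        ≤ 2 / ((m : ℝ) + 1) ^ 2 *
            (∑ ℓ ∈ Finset.Icc 1 m, (1 : ℝ) / (ℓ : ℝ) ^ 2 +
             ∑ ℓ ∈ Finset.Icc 1 m, (1 : ℝ) / ((m + 1 - ℓ : ℕ) : ℝ) ^ 2) := by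
          rw [← step2]; exact step1
      _ ≤ 2 / ((m : ℝ) + 1) ^ 2 * 4 := by
          apply mul_le_mul_of_nonneg_left (by linarith) (by positivity)
      _ ≤ 2 / (m : ℝ) ^ 2 * 4 := by
          apply mul_le_mul_of_nonneg_right hmono (by norm_num)
      _ = 8 / (m : ℝ) ^ 2 := by ring
  have hNpow : (0 : ℝ) < (N : ℝ) ^ ((1 : ℤ) - (m : ℤ)) := by
    apply zpow_pos
    exact lt_of_le_of_ne (Nat.cast_nonneg N) (Ne.symm hN0)
  have hfacpos : (0 : ℝ) < (Nat.factorial (m - 1) : ℝ) := by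
    exact_mod_cast (Nat.factorial_pos (m - 1))
  calc C0 ^ 2 * (Nat.factorial (m - 1) : ℝ) * (N : ℝ) ^ ((1 : ℤ) - (m : ℤ)) *
        ∑ ℓ ∈ Finset.Icc 1 m, (1 / ((ℓ : ℝ) ^ 2 * ((m + 1 - ℓ : ℕ) : ℝ) ^ 2))
      ≤ C0 ^ 2 * (Nat.factorial (m - 1) : ℝ) * (N : ℝ) ^ ((1 : ℤ) - (m : ℤ)) *
        (8 / (m : ℝ) ^ 2) := by
        apply mul_le_mul_of_nonneg_left hS (by positivity)
    _ = 8 * C0 ^ 2 * (Nat.factorial (m - 1) : ℝ) / (m : ℝ) ^ 2 *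
        (N : ℝ) ^ ((1 : ℤ) - (m : ℤ)) := by ring
end

section
/- On the torus $\mathbb T^d$, let $M^{N}$ be a probability density on $(\mathbb T^d)^N$ that is symmetric in its $N$ variables and translation invariant, i.e. $M^N(x_1+h,\dots,x_N+h)=M^N(x_1,\dots,x_N)$ for all $h\in\mathbb T^d$, and suppose its first marginal $M^{N,1}$ satisfies the stationary equation $\triangle M^{N,1} = \kappa\frac{N-1}{N}\,\mathrm{div}\big(\int_{\mathbb T^d} K_0(\cdot-y)\,M^{N,2}(\cdot,y)\,dy\big)$ for a bounded kernel $K_0$. Then $\int_{\mathbb T^d}K_0(x-y)M^{N,2}(x,y)\,dy$ is a constant vector independent of $x$, the equation reduces to $\triangle M^{N,1}=0$, and hence $M^{N,1}\equiv1$ is the uniform density. -/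
open MeasureTheory

/-- Divergence of a vector field on `ℝ^d` as the trace of its Fréchet derivative. -/
noncomputable def ediv {d : ℕ}
    (F : EuclideanSpace ℝ (Fin d) → EuclideanSpace ℝ (Fin d))
    (x : EuclideanSpace ℝ (Fin d)) : ℝ :=
  LinearMap.trace ℝ _ (fderiv ℝ F x : EuclideanSpace ℝ (Fin d) →ₗ[ℝ] EuclideanSpace ℝ (Fin d))

/-- Inclusion of integer vectors into `ℝ^d`, giving the lattice of periods of the torus. -/
noncomputable def elat {d : ℕ} (k : Fin d → ℤ) : EuclideanSpace ℝ (Fin d) :=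
  (EuclideanSpace.equiv (Fin d) ℝ).symm fun i => (k i : ℝ)

/-- The fundamental domain `[0,1)^d` of the torus `𝕋^d`. -/
def ebox (d : ℕ) : Set (EuclideanSpace ℝ (Fin d)) :=
  {x | ∀ i, x i ∈ Set.Ico (0 : ℝ) 1}

section Aux

open Pointwise InnerProductSpace

variable {d : ℕ}

noncomputable abbrev bE (d : ℕ) := (EuclideanSpace.basisFun (Fin d) ℝ).toBasis

lemma ebox_eq (d : ℕ) : ebox d = ZSpan.fundamentalDomain (bE d) := by
  ext x
  simp [ebox, ZSpan.fundamentalDomain, OrthonormalBasis.coe_toBasis_repr_apply,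
    EuclideanSpace.basisFun_repr]

lemma lattice_mem {x : EuclideanSpace ℝ (Fin d)}
    (hx : x ∈ Submodule.span ℤ (Set.range (bE d))) : ∃ k : Fin d → ℤ, x = elat k := by
  induction hx using Submodule.span_induction with
  | mem y hy =>
    obtain ⟨i, rfl⟩ := hy
    exact ⟨Pi.single i 1, by
      refine PiLp.ext fun j => ?_
      simp [EuclideanSpace.basisFun_apply, elat, EuclideanSpace.single_apply, Pi.single_apply]⟩
  | zero => exact ⟨0, PiLp.ext fun j => by simp [elat]⟩
  | add y z _ _ hy hz =>
    obtain ⟨k, rfl⟩ := hy; obtain ⟨k', rfl⟩ := hz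
    exact ⟨k + k', PiLp.ext fun j => by simp [elat]⟩
  | smul z y _ hy =>
    obtain ⟨k, rfl⟩ := hy
    exact ⟨z • k, PiLp.ext fun j => by simp [elat]⟩

lemma shift_integral {F : Type*} [NormedAddCommGroup F] [NormedSpace ℝ F]
    (f : EuclideanSpace ℝ (Fin d) → F)
    (hper : ∀ (k : Fin d → ℤ) (y), f (y + elat k) = f y) (x : EuclideanSpace ℝ (Fin d)) :
    ∫ y in ebox d, f (y - x) = ∫ y in ebox d, f y := by
  have h1 : (∫ y in ebox d, f (y - x)) = ∫ z in (fun z => z + x) ⁻¹' (ebox d), f z := by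
    rw [← (measurePreserving_add_right volume x).setIntegral_preimage_emb
      (measurableEmbedding_addRight x) (fun y => f (y - x)) (ebox d)]
    simp
  have h2 : (fun z => z + x) ⁻¹' (ebox d) = (-x) +ᵥ ebox d := by
    ext z
    rw [Set.mem_vadd_set_iff_neg_vadd_mem]
    simp [vadd_eq_add, add_comm]
  rw [h1, h2, ebox_eq]
  haveI : Countable ↥(Submodule.span ℤ (Set.range ⇑(bE d))).toAddSubgroup :=
    (inferInstance : Countable (Submodule.span ℤ (Set.range ⇑(bE d))))
  refine IsAddFundamentalDomain.setIntegral_eq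
    ((ZSpan.isAddFundamentalDomain' (bE d) volume).vadd_of_comm (-x))
    (ZSpan.isAddFundamentalDomain' (bE d) volume) ?_
  rintro ⟨g, hg⟩ y
  obtain ⟨k, rfl⟩ := lattice_mem hg
  show f (elat k + y) = f y
  rw [add_comm]; exact hper k y

lemma trace_eq (A : EuclideanSpace ℝ (Fin d) →ₗ[ℝ] EuclideanSpace ℝ (Fin d)) :
    LinearMap.trace ℝ _ A = ∑ i, A (EuclideanSpace.single i (1:ℝ)) i := by
  classical
  rw [LinearMap.trace_eq_matrix_trace ℝ (bE d), Matrix.trace]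
  simp [Matrix.diag, LinearMap.toMatrix_apply, EuclideanSpace.basisFun_apply,
    OrthonormalBasis.coe_toBasis_repr_apply, EuclideanSpace.basisFun_repr,
    OrthonormalBasis.coe_toBasis]

lemma ediv_const (c : EuclideanSpace ℝ (Fin d)) (x : EuclideanSpace ℝ (Fin d)) :
    ediv (fun _ => c) x = 0 := by
  simp [ediv]

lemma fderiv_shift {F : Type*} [NormedAddCommGroup F] [NormedSpace ℝ F]
    (f : EuclideanSpace ℝ (Fin d) → F) (hf : Differentiable ℝ f)
    (c x : EuclideanSpace ℝ (Fin d)) :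
    fderiv ℝ (fun y => f (y + c)) x = fderiv ℝ f (x + c) := by
  have h1 : HasFDerivAt (fun y : EuclideanSpace ℝ (Fin d) => y + c)
      (ContinuousLinearMap.id ℝ _) x := (hasFDerivAt_id x).add_const c
  have h2 : HasFDerivAt (fun y => f (y + c)) (fderiv ℝ f (x + c)) x := by
    exact ((hf (x + c)).hasFDerivAt.comp x h1)
  exact h2.fderiv

lemma fderiv_per {F : Type*} [NormedAddCommGroup F] [NormedSpace ℝ F]
    (f : EuclideanSpace ℝ (Fin d) → F) (hf : Differentiable ℝ f)
    (c : EuclideanSpace ℝ (Fin d)) (hper : ∀ y, f (y + c) = f y)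
    (x : EuclideanSpace ℝ (Fin d)) :
    fderiv ℝ f (x + c) = fderiv ℝ f x := by
  rw [← fderiv_shift f hf c x]
  congr 1
  exact funext hper

lemma insertNth_one_eq {n : ℕ} (i : Fin (n+1)) (x : Fin n → ℝ) :
    (i.insertNth (1:ℝ) x : Fin (n+1) → ℝ)
      = (i.insertNth (0:ℝ) x : Fin (n+1) → ℝ) + Pi.single i 1 := by
  funext j
  rcases eq_or_ne i j with rfl | hne
  · simp
  · obtain ⟨k, rfl⟩ := Fin.exists_succAbove_eq hne.symm
    simp [Fin.insertNth_apply_succAbove, Pi.single_apply, (Fin.succAbove_ne i k).symm,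
      Fin.succAbove_ne i k]

lemma div_integral_zero {n : ℕ} (w : (Fin (n+1) → ℝ) → (Fin (n+1) → ℝ))
    (w' : (Fin (n+1) → ℝ) → ((Fin (n+1) → ℝ) →L[ℝ] (Fin (n+1) → ℝ)))
    (hw : ∀ x, HasFDerivAt w (w' x) x)
    (hper : ∀ (i : Fin (n+1)) (x), w (x + Pi.single i 1) = w x)
    (hi : IntegrableOn (fun x => ∑ i, w' x (Pi.single i 1) i) (Set.Icc 0 1)) :
    ∫ x in Set.Icc (0 : Fin (n+1) → ℝ) 1, ∑ i, w' x (Pi.single i 1) i = 0 := by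
  have hle : (0 : Fin (n+1) → ℝ) ≤ 1 := fun i => zero_le_one
  have hcont : ContinuousOn w (Set.Icc 0 1) :=
    (Differentiable.continuous fun x => (hw x).differentiableAt).continuousOn
  rw [integral_divergence_of_hasFDerivAt_off_countable 0 1 hle w w' ∅
    Set.countable_empty hcont (fun x _ => hw x) hi]
  refine Finset.sum_eq_zero fun i _ => ?_
  rw [sub_eq_zero]
  refine setIntegral_congr_fun (measurableSet_Icc) fun x _ => ?_
  show w (i.insertNth ((1 : Fin (n+1) → ℝ) i) x) i = w (i.insertNth ((0 : Fin (n+1) → ℝ) i) x) i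
  have : (i.insertNth ((1 : Fin (n+1) → ℝ) i) x : Fin (n+1) → ℝ)
      = (i.insertNth ((0 : Fin (n+1) → ℝ) i) x : Fin (n+1) → ℝ) + Pi.single i 1 := by
    simpa using insertNth_one_eq i x
  rw [this, hper]

/-- The evaluation-of-coordinates linear map recovering a Euclidean vector from a functional. -/
noncomputable def psi (d : ℕ) :
    (EuclideanSpace ℝ (Fin d) →L[ℝ] ℝ) →L[ℝ] EuclideanSpace ℝ (Fin d) :=
  ((EuclideanSpace.equiv (Fin d) ℝ).symm : (Fin d → ℝ) →L[ℝ] EuclideanSpace ℝ (Fin d)) ∘L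
    (ContinuousLinearMap.pi fun i =>
      ContinuousLinearMap.apply ℝ ℝ (EuclideanSpace.single i (1:ℝ)))

lemma grad_eq_psi (f : EuclideanSpace ℝ (Fin d) → ℝ) :
    gradient f = fun x => psi d (fderiv ℝ f x) := by
  funext x
  refine PiLp.ext fun i => ?_
  show gradient f x i = fderiv ℝ f x (EuclideanSpace.single i 1)
  rw [show fderiv ℝ f x = toDual ℝ _ (gradient f x) by
    simp [gradient, LinearIsometryEquiv.apply_symm_apply]]
  rw [toDual_apply_apply]
  rw [EuclideanSpace.inner_single_right]; simp

lemma elat_zero : (elat (0 : Fin d → ℤ)) = 0 := PiLp.ext fun j => by simp [elat]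

lemma measurableSet_ebox (d : ℕ) : MeasurableSet (ebox d) := by
  have : ebox d = (MeasurableEquiv.toLp 2 (Fin d → ℝ)).symm ⁻¹'
      (Set.pi Set.univ fun _ : Fin d => Set.Ico (0:ℝ) 1) := by
    ext x; simp [ebox, Set.mem_pi]
  rw [this]
  exact (MeasurableEquiv.measurable _) (MeasurableSet.univ_pi fun _ => measurableSet_Ico)

lemma volume_ebox (d : ℕ) : volume (ebox d) = 1 := by
  have h : ebox d = (MeasurableEquiv.toLp 2 (Fin d → ℝ)).symm ⁻¹'
      (Set.pi Set.univ fun _ : Fin d => Set.Ico (0:ℝ) 1) := by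
    ext x; simp [ebox, Set.mem_pi]
  rw [h, (EuclideanSpace.volume_preserving_symm_measurableEquiv_toLp (Fin d)).measure_preimage
    ((MeasurableSet.univ_pi fun _ => measurableSet_Ico).nullMeasurableSet)]
  simp [volume_pi_pi]

set_option maxHeartbeats 2000000 in
lemma harmonic_periodic_eq_one {d : ℕ} (hd : 1 ≤ d)
    (M1 : EuclideanSpace ℝ (Fin d) → ℝ) (hM1smooth : ContDiff ℝ (⊤ : ℕ∞) M1)
    (hM1per : ∀ (k : Fin d → ℤ) (x), M1 (x + elat k) = M1 x)
    (hharm : ∀ x, ediv (gradient M1) x = 0)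
    (hmass : ∫ x in ebox d, M1 x = 1) :
    ∀ x, M1 x = 1 := by
  obtain ⟨n, rfl⟩ := Nat.exists_eq_succ_of_ne_zero (by omega : d ≠ 0)
  classical
  have hM1diff : Differentiable ℝ M1 := hM1smooth.differentiable (by simp)
  have hDdiff : Differentiable ℝ (fderiv ℝ M1) :=
    (hM1smooth.fderiv_right (m := (⊤ : ℕ∞)) (by simp)).differentiable (by simp)
  have hGpsi : gradient M1 = fun x => psi (n+1) (fderiv ℝ M1 x) := grad_eq_psi M1
  have hGd : ∀ x, HasFDerivAt (gradient M1) ((psi (n+1)) ∘L fderiv ℝ (fderiv ℝ M1) x) x := by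
    intro x
    rw [hGpsi]
    exact (psi (n+1)).hasFDerivAt.comp x (hDdiff x).hasFDerivAt
  have hGcont : Continuous (gradient M1) := by
    rw [hGpsi]; exact (psi (n+1)).continuous.comp hDdiff.continuous
  have hDsingle : ∀ x i, fderiv ℝ M1 x (EuclideanSpace.single i 1) = gradient M1 x i := by
    intro x i
    conv_rhs => rw [hGpsi]
    rfl
  -- the vector field `V = M1 • ∇M1` and its derivative
  have hVd : ∀ x, HasFDerivAt (fun y => M1 y • gradient M1 y)
      (M1 x • ((psi (n+1)) ∘L fderiv ℝ (fderiv ℝ M1) x)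
        + (fderiv ℝ M1 x).smulRight (gradient M1 x)) x :=
    fun x => (hM1diff x).hasFDerivAt.smul (hGd x)
  -- divergence of V equals `‖∇M1‖²`
  have key : ∀ x, ∑ i, (M1 x • ((psi (n+1)) ∘L fderiv ℝ (fderiv ℝ M1) x)
        + (fderiv ℝ M1 x).smulRight (gradient M1 x)) (EuclideanSpace.single i 1) i
      = ∑ i, (gradient M1 x i)^2 := by
    intro x
    have tr0 : ∑ i, (fderiv ℝ (gradient M1) x) (EuclideanSpace.single i (1:ℝ)) i = 0 := by
      have h := hharm x
      rw [ediv, trace_eq] at h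
      simpa using h
    rw [(hGd x).fderiv] at tr0
    have hterm : ∀ i : Fin (n+1), (M1 x • ((psi (n+1)) ∘L fderiv ℝ (fderiv ℝ M1) x)
        + (fderiv ℝ M1 x).smulRight (gradient M1 x)) (EuclideanSpace.single i 1) i
        = M1 x * (((psi (n+1)) ∘L fderiv ℝ (fderiv ℝ M1) x) (EuclideanSpace.single i 1) i)
          + (gradient M1 x i)^2 := by
      intro i
      simp only [ContinuousLinearMap.add_apply, ContinuousLinearMap.smul_apply,
        ContinuousLinearMap.smulRight_apply, PiLp.add_apply, PiLp.smul_apply,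
        smul_eq_mul, hDsingle]
      ring
    rw [Finset.sum_congr rfl (fun i _ => hterm i), Finset.sum_add_distrib, ← Finset.mul_sum,
      tr0, mul_zero, zero_add]
  -- transport to `Fin (n+1) → ℝ` and apply the divergence theorem
  have hwd : ∀ y : Fin (n+1) → ℝ, HasFDerivAt
      (fun y' => (EuclideanSpace.equiv (Fin (n+1)) ℝ)
        (M1 ((EuclideanSpace.equiv (Fin (n+1)) ℝ).symm y')
          • gradient M1 ((EuclideanSpace.equiv (Fin (n+1)) ℝ).symm y')))
      ((((EuclideanSpace.equiv (Fin (n+1)) ℝ) :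
          EuclideanSpace ℝ (Fin (n+1)) →L[ℝ] (Fin (n+1) → ℝ)) ∘L
        (M1 ((EuclideanSpace.equiv (Fin (n+1)) ℝ).symm y)
            • ((psi (n+1)) ∘L fderiv ℝ (fderiv ℝ M1) ((EuclideanSpace.equiv (Fin (n+1)) ℝ).symm y))
          + (fderiv ℝ M1 ((EuclideanSpace.equiv (Fin (n+1)) ℝ).symm y)).smulRight
              (gradient M1 ((EuclideanSpace.equiv (Fin (n+1)) ℝ).symm y)))) ∘L
        (((EuclideanSpace.equiv (Fin (n+1)) ℝ).symm :
          (Fin (n+1) → ℝ) →L[ℝ] EuclideanSpace ℝ (Fin (n+1))))) y := by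
    intro y
    exact (((EuclideanSpace.equiv (Fin (n+1)) ℝ) :
        EuclideanSpace ℝ (Fin (n+1)) →L[ℝ] (Fin (n+1) → ℝ)).hasFDerivAt.comp _
      ((hVd _).comp y ((EuclideanSpace.equiv (Fin (n+1)) ℝ).symm :
        (Fin (n+1) → ℝ) →L[ℝ] EuclideanSpace ℝ (Fin (n+1))).hasFDerivAt))
  set eqv := EuclideanSpace.equiv (Fin (n+1)) ℝ with heqv
  set w : (Fin (n+1) → ℝ) → (Fin (n+1) → ℝ) :=
    fun y' => eqv (M1 (eqv.symm y') • gradient M1 (eqv.symm y')) with hwdef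
  set w' : (Fin (n+1) → ℝ) → ((Fin (n+1) → ℝ) →L[ℝ] (Fin (n+1) → ℝ)) :=
    fun y => ((eqv : EuclideanSpace ℝ (Fin (n+1)) →L[ℝ] (Fin (n+1) → ℝ)) ∘L
        (M1 (eqv.symm y) • ((psi (n+1)) ∘L fderiv ℝ (fderiv ℝ M1) (eqv.symm y))
          + (fderiv ℝ M1 (eqv.symm y)).smulRight (gradient M1 (eqv.symm y)))) ∘L
        ((eqv.symm : (Fin (n+1) → ℝ) →L[ℝ] EuclideanSpace ℝ (Fin (n+1)))) with hw'def
  have hsum : ∀ y, ∑ i, w' y (Pi.single i 1) i = ∑ i, (gradient M1 (eqv.symm y) i)^2 := by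
    intro y
    rw [← key (eqv.symm y)]
    rfl
  -- periodicity of w
  have hGper : ∀ (k : Fin (n+1) → ℤ) (x), gradient M1 (x + elat k) = gradient M1 x := by
    intro k x
    rw [hGpsi]
    simp only
    rw [show fderiv ℝ M1 (x + elat k) = fderiv ℝ M1 x from
      fderiv_per M1 hM1diff (elat k) (fun y => hM1per k y) x]
  have hwper : ∀ (i : Fin (n+1)) (y), w (y + Pi.single i 1) = w y := by
    intro i y
    have hshift : eqv.symm (y + Pi.single i 1)
        = eqv.symm y + elat (Pi.single i 1 : Fin (n+1) → ℤ) := by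
      refine PiLp.ext fun j => ?_
      have hcast : (((Pi.single i 1 : Fin (n+1) → ℤ) j : ℤ) : ℝ)
          = (Pi.single i (1:ℝ) : Fin (n+1) → ℝ) j := by
        simp only [Pi.single_apply]
        split <;> simp
      show y j + (Pi.single i (1:ℝ) : Fin (n+1) → ℝ) j
          = y j + (((Pi.single i 1 : Fin (n+1) → ℤ) j : ℤ) : ℝ)
      rw [hcast]
    simp only [hwdef, hshift, hM1per, hGper]
  -- integrability of the divergence
  have hHcont : Continuous fun y : Fin (n+1) → ℝ => ∑ i, (gradient M1 (eqv.symm y) i)^2 := by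
    refine continuous_finset_sum _ fun i _ => ?_
    have h1 : Continuous fun y : Fin (n+1) → ℝ => gradient M1 (eqv.symm y) i :=
      (continuous_apply i).comp
        ((eqv : EuclideanSpace ℝ (Fin (n+1)) →L[ℝ] (Fin (n+1) → ℝ)).continuous.comp
        (hGcont.comp ((eqv.symm : (Fin (n+1) → ℝ) →L[ℝ]
          EuclideanSpace ℝ (Fin (n+1)))).continuous))
    exact h1.pow 2
  have hInt : IntegrableOn (fun y => ∑ i, w' y (Pi.single i 1) i)
      (Set.Icc (0 : Fin (n+1) → ℝ) 1) := by
    rw [show (fun y => ∑ i, w' y (Pi.single i 1) i)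
      = fun y => ∑ i, (gradient M1 (eqv.symm y) i)^2 from funext hsum]
    exact hHcont.continuousOn.integrableOn_compact isCompact_Icc
  have hzero := div_integral_zero w w' (fun y => hwd y) hwper hInt
  rw [show (fun y => ∑ i, w' y (Pi.single i 1) i)
      = fun y => ∑ i, (gradient M1 (eqv.symm y) i)^2 from funext hsum] at hzero
  -- the divergence is nonnegative, so it vanishes on the open cube
  have hInt' : IntegrableOn (fun y => ∑ i, (gradient M1 (eqv.symm y) i)^2)
      (Set.Icc (0 : Fin (n+1) → ℝ) 1) := by
    rw [show (fun y => ∑ i, w' y (Pi.single i 1) i)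
      = fun y => ∑ i, (gradient M1 (eqv.symm y) i)^2 from funext hsum] at hInt
    exact hInt
  have hae : (fun y => ∑ i, (gradient M1 (eqv.symm y) i)^2)
      =ᵐ[volume.restrict (Set.Icc (0 : Fin (n+1) → ℝ) 1)] 0 := by
    rw [← integral_eq_zero_iff_of_nonneg
      (fun y => Finset.sum_nonneg fun i _ => sq_nonneg _) hInt']
    exact hzero
  have hHzero : ∀ y ∈ Set.pi Set.univ (fun _ : Fin (n+1) => Set.Ioo (0:ℝ) 1),
      ∑ i, (gradient M1 (eqv.symm y) i)^2 = 0 := by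
    intro y hy
    by_contra hne
    have hO : IsOpen ((Set.pi Set.univ fun _ : Fin (n+1) => Set.Ioo (0:ℝ) 1)
        ∩ {z | ∑ i, (gradient M1 (eqv.symm z) i)^2 ≠ 0}) :=
      ((isOpen_set_pi Set.finite_univ fun _ _ => isOpen_Ioo).inter
        (isOpen_ne_fun hHcont continuous_const))
    have hpos : 0 < volume ((Set.pi Set.univ fun _ : Fin (n+1) => Set.Ioo (0:ℝ) 1)
        ∩ {z | ∑ i, (gradient M1 (eqv.symm z) i)^2 ≠ 0}) :=
      hO.measure_pos volume ⟨y, hy, hne⟩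
    have hsub : (Set.pi Set.univ fun _ : Fin (n+1) => Set.Ioo (0:ℝ) 1)
          ∩ {z | ∑ i, (gradient M1 (eqv.symm z) i)^2 ≠ 0}
        ⊆ {z | ∑ i, (gradient M1 (eqv.symm z) i)^2 ≠ 0} ∩ Set.Icc 0 1 := by
      rintro z ⟨hz1, hz2⟩
      refine ⟨hz2, ?_⟩
      rw [Set.mem_Icc]
      exact ⟨fun i => (hz1 i (Set.mem_univ i)).1.le, fun i => (hz1 i (Set.mem_univ i)).2.le⟩
    have hnull : volume ({z | ∑ i, (gradient M1 (eqv.symm z) i)^2 ≠ 0}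
        ∩ Set.Icc (0 : Fin (n+1) → ℝ) 1) = 0 := by
      have hm : MeasurableSet {z | ∑ i, (gradient M1 (eqv.symm z) i)^2 ≠ 0} :=
        (isOpen_ne_fun hHcont continuous_const).measurableSet
      have hae' : ∀ᵐ z ∂(volume.restrict (Set.Icc (0 : Fin (n+1) → ℝ) 1)),
          ∑ i, (gradient M1 (eqv.symm z) i)^2 = 0 := by
        filter_upwards [hae] with z hz using by simpa using hz
      rw [ae_iff] at hae'
      rw [Measure.restrict_apply hm] at hae'
      exact hae'
    exact absurd (le_antisymm (hnull ▸ measure_mono hsub) zero_le) hpos.ne'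
  -- gradient vanishes on the open cube
  have hfd0 : ∀ x : EuclideanSpace ℝ (Fin (n+1)), (∀ i, x i ∈ Set.Ioo (0:ℝ) 1) →
      fderiv ℝ M1 x = 0 := by
    intro x hx
    have hy : eqv x ∈ Set.pi Set.univ (fun _ : Fin (n+1) => Set.Ioo (0:ℝ) 1) :=
      fun i _ => hx i
    have h0 := hHzero _ hy
    rw [show eqv.symm (eqv x) = x from eqv.symm_apply_apply x] at h0
    have hGx : gradient M1 x = 0 := by
      refine PiLp.ext fun i => ?_
      have h6 := (Finset.sum_eq_zero_iff_of_nonneg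
        (fun i _ => sq_nonneg (gradient M1 x i))).mp h0 i (Finset.mem_univ i)
      exact pow_eq_zero_iff (two_ne_zero) |>.mp h6
    have h7 : fderiv ℝ M1 x = toDual ℝ _ (gradient M1 x) := by
      simp [gradient, LinearIsometryEquiv.apply_symm_apply]
    rw [h7, hGx, map_zero]
  -- M1 is constant on the open cube by the mean value inequality
  have hzmem : ∀ i : Fin (n+1),
      ((EuclideanSpace.equiv (Fin (n+1)) ℝ).symm (fun _ => (1:ℝ)/2)) i ∈ Set.Ioo (0:ℝ) 1 :=
    fun i => by norm_num [Set.mem_Ioo]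
  have hconv : Convex ℝ {x : EuclideanSpace ℝ (Fin (n+1)) | ∀ i, x i ∈ Set.Ioo (0:ℝ) 1} := by
    intro p hp q hq a b ha hb hab
    intro i
    show a * p i + b * q i ∈ Set.Ioo (0:ℝ) 1
    simpa using (convex_Ioo (0:ℝ) 1) (hp i) (hq i) ha hb hab
  have hconst : ∀ x : EuclideanSpace ℝ (Fin (n+1)), (∀ i, x i ∈ Set.Ioo (0:ℝ) 1) →
      M1 x = M1 ((EuclideanSpace.equiv (Fin (n+1)) ℝ).symm (fun _ => (1:ℝ)/2)) := by
    intro x hx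
    have h := hconv.norm_image_sub_le_of_norm_fderiv_le
      (f := M1) (fun y _ => hM1diff y) (C := 0)
      (fun y hy => by rw [hfd0 y hy]; simp)
      (hzmem : _ ∈ {x : EuclideanSpace ℝ (Fin (n+1)) | ∀ i, x i ∈ Set.Ioo (0:ℝ) 1})
      (hx : x ∈ {x : EuclideanSpace ℝ (Fin (n+1)) | ∀ i, x i ∈ Set.Ioo (0:ℝ) 1})
    rw [zero_mul] at h
    have h8 := le_antisymm h (norm_nonneg _)
    rwa [norm_sub_eq_zero_iff] at h8
  -- M1 equals the same constant on `ebox`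
  have hclosed : ∀ x ∈ ebox (n+1),
      M1 x = M1 ((EuclideanSpace.equiv (Fin (n+1)) ℝ).symm (fun _ => (1:ℝ)/2)) := by
    intro x hx
    set z : EuclideanSpace ℝ (Fin (n+1)) :=
      (EuclideanSpace.equiv (Fin (n+1)) ℝ).symm (fun _ => (1:ℝ)/2) with hzdef
    set y : ℕ → EuclideanSpace ℝ (Fin (n+1)) :=
      fun m => x + ((1:ℝ)/(m+1)) • (z - x) with hydef
    have hymem : ∀ m, ∀ i, y m i ∈ Set.Ioo (0:ℝ) 1 := by
      intro m i
      obtain ⟨h0, h1⟩ := hx i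
      have ht0 : (0:ℝ) < 1/(m+1) := by positivity
      have ht1 : (1:ℝ)/(m+1) ≤ 1 := by
        rw [div_le_one (by positivity)]
        have : (0:ℝ) ≤ m := Nat.cast_nonneg m
        linarith
      have hcoord : y m i = x i + (1/(m+1)) * ((1:ℝ)/2 - x i) := rfl
      rw [Set.mem_Ioo, hcoord]
      constructor
      · nlinarith
      · nlinarith
    have hlim : Filter.Tendsto y Filter.atTop (nhds x) := by
      have h1 : Filter.Tendsto (fun m : ℕ => (1:ℝ)/(m+1)) Filter.atTop (nhds 0) :=
        tendsto_one_div_add_atTop_nhds_zero_nat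
      have h2 : Filter.Tendsto y Filter.atTop (nhds (x + (0:ℝ) • (z - x))) :=
        Filter.Tendsto.add tendsto_const_nhds (h1.smul_const (z - x))
      simpa using h2
    have h3 : Filter.Tendsto (fun m => M1 (y m)) Filter.atTop (nhds (M1 x)) :=
      (hM1smooth.continuous.tendsto x).comp hlim
    have h4 : (fun m => M1 (y m)) = fun _ => M1 z := funext fun m => hconst _ (hymem m)
    rw [h4] at h3
    exact tendsto_nhds_unique h3 tendsto_const_nhds
  -- compute the constant from the mass normalization
  have hintc : ∫ x in ebox (n+1), M1 x
      = M1 ((EuclideanSpace.equiv (Fin (n+1)) ℝ).symm (fun _ => (1:ℝ)/2)) := by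
    rw [setIntegral_congr_fun (measurableSet_ebox (n+1)) hclosed, setIntegral_const,
      Measure.real, volume_ebox]
    simp
  have hc1 : M1 ((EuclideanSpace.equiv (Fin (n+1)) ℝ).symm (fun _ => (1:ℝ)/2)) = 1 := by
    rw [← hintc, hmass]
  -- extend to all of space by periodicity
  intro x
  have hfrac : x - elat (fun i => ⌊x i⌋) ∈ ebox (n+1) := by
    intro i
    have h9 : (x - elat (fun i => ⌊x i⌋)) i = Int.fract (x i) := by
      show x i - (⌊x i⌋ : ℝ) = Int.fract (x i)
      rw [Int.fract]
    rw [h9]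
    exact ⟨Int.fract_nonneg _, Int.fract_lt_one _⟩
  have h10 := hclosed _ hfrac
  rw [hc1] at h10
  rw [← hM1per (fun i => ⌊x i⌋) (x - elat (fun i => ⌊x i⌋)), sub_add_cancel] at h10
  exact h10

end Aux

/-- On the torus `𝕋^d` (realized as `ℤ^d`-periodic functions on `ℝ^d`): if `M^N` is a
symmetric, translation-invariant probability density whose first marginal `M^{N,1}`
satisfies the stationary equation
`Δ M^{N,1} = κ (N-1)/N · div(∫ K₀(·-y) M^{N,2}(·,y) dy)` with a bounded kernel `K₀`,
then the interaction term `∫ K₀(x-y) M^{N,2}(x,y) dy` is a constant vector, the equation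
reduces to `Δ M^{N,1} = 0`, and `M^{N,1} ≡ 1` is the uniform density. -/
theorem stmt_15 (d N : ℕ) (hd : 1 ≤ d) (hN : 2 ≤ N) (κ : ℝ)
    (M1 : EuclideanSpace ℝ (Fin d) → ℝ)
    (M2 : EuclideanSpace ℝ (Fin d) × EuclideanSpace ℝ (Fin d) → ℝ)
    (K0 : EuclideanSpace ℝ (Fin d) → EuclideanSpace ℝ (Fin d))
    (CK : ℝ) (hK0bdd : ∀ x, ‖K0 x‖ ≤ CK) (hK0cont : Continuous K0)
    (hK0per : ∀ (k : Fin d → ℤ) (x), K0 (x + elat k) = K0 x)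
    (hM1smooth : ContDiff ℝ (⊤ : ℕ∞) M1) (hM2cont : Continuous M2)
    (hM1per : ∀ (k : Fin d → ℤ) (x), M1 (x + elat k) = M1 x)
    (hM2per : ∀ (k k' : Fin d → ℤ) (x y), M2 (x + elat k, y + elat k') = M2 (x, y))
    (hM1nn : ∀ x, 0 ≤ M1 x) (hM2nn : ∀ p, 0 ≤ M2 p)
    (hM2sym : ∀ x y, M2 (x, y) = M2 (y, x))
    -- translation invariance of the `N`-particle Gibbs state, at the level of `M^{N,2}`
    (hTI : ∀ h x y, M2 (x + h, y + h) = M2 (x, y))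
    (hmass : ∫ x in ebox d, M1 x = 1)
    (hmarg : ∀ x, ∫ y in ebox d, M2 (x, y) = M1 x)
    -- stationary equation for the first marginal
    (heq : ∀ x, ediv (gradient M1) x =
      κ * ((N : ℝ) - 1) / (N : ℝ) *
        ediv (fun x' => ∫ y in ebox d, M2 (x', y) • K0 (x' - y)) x) :
    (∃ c : EuclideanSpace ℝ (Fin d),
        ∀ x, (∫ y in ebox d, M2 (x, y) • K0 (x - y)) = c) ∧
    (∀ x, ediv (gradient M1) x = 0) ∧
    (∀ x, M1 x = 1) := by
  classical
  have hg0per : ∀ (k : Fin d → ℤ) (y : EuclideanSpace ℝ (Fin d)),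
      M2 (0, y + elat k) • K0 (-(y + elat k)) = M2 (0, y) • K0 (-y) := by
    intro k y
    have h1 : M2 (0, y + elat k) = M2 (0, y) := by
      have h2 := hM2per 0 k 0 y
      rwa [show elat (0 : Fin d → ℤ) = 0 from elat_zero, add_zero] at h2
    have h3 : -(y + elat k) = -y + elat (fun i => -(k i)) := by
      refine PiLp.ext fun j => ?_
      show -(y j + ((k j : ℤ) : ℝ)) = -(y j) + (((-(k j) : ℤ) : ℝ))
      push_cast
      ring
    rw [h1, h3, hK0per]
  have hpart1 : ∀ x, (∫ y in ebox d, M2 (x, y) • K0 (x - y))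
      = ∫ y in ebox d, M2 (0, y) • K0 (-y) := by
    intro x
    have hcongr : ∀ y, M2 (x, y) • K0 (x - y) = M2 (0, y - x) • K0 (-(y - x)) := by
      intro y
      have h1 := hTI x 0 (y - x)
      rw [zero_add, sub_add_cancel] at h1
      rw [← h1, neg_sub]
    rw [show (fun y => M2 (x, y) • K0 (x - y))
      = fun y => M2 (0, y - x) • K0 (-(y - x)) from funext hcongr]
    exact shift_integral (fun y => M2 (0, y) • K0 (-y)) hg0per x
  have hF : (fun x' => ∫ y in ebox d, M2 (x', y) • K0 (x' - y))
      = fun _ => (∫ y in ebox d, M2 (0, y) • K0 (-y)) := funext hpart1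
  have hpart2 : ∀ x, ediv (gradient M1) x = 0 := by
    intro x
    rw [heq x, hF, ediv_const, mul_zero]
  exact ⟨⟨_, hpart1⟩, hpart2,
    harmonic_periodic_eq_one hd M1 hM1smooth hM1per hpart2 hmass⟩
end
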